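/- arXiv:1610.09611 — 3 statements merged into one kernel-verified Lean document; each statement's English description precedes it below -/
import Mathlib

section
/- Let X and Y be Banach spaces, K : X → Y a map, x₀ ∈ X, 0 < q < 1, B₀ > 0, and set η₀ = ‖K(x₀)‖. Let S be the closed ball in X of radius B₀η₀/(1−q) centered at x₀. Assume: (i) K is Fréchet differentiable at every point of S; (ii) the derivative K'(x₀) has a bounded linear right inverse B : Y → X (K'(x₀) ∘ B = id_Y) with ‖B‖ ≤ B₀; (iii) ‖K'(x₁) − K'(x₂)‖ ≤ q/(B₀(1+q)) for all x₁, x₂ ∈ S. Then there exist a point x* ∈ S with K(x*) = 0 and a sequence (x_n)_{n≥0} in S starting from the given x₀ such that for every n: K'(x_n)(x_{n+1} − x_n) = −K(x_n), ‖x_{n+1} − x_n‖ ≤ (1+q)B₀‖K(x_n)‖, and ‖x* − x_n‖ ≤ qⁿ η₀ B₀/(1−q); in particular x_n → x*. -/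
/-!
On `S` every `K'(x)` is within `q / (B₀ (1 + q))` of `K'(x₀)`, so `K'(x) B = 1 - (K'(x₀) - K'(x)) B`
is a Neumann-series perturbation of the identity, and `B (K'(x) B)⁻¹` is a right inverse of `K'(x)`
of norm at most `(1 + q) B₀`, equal to `B` at `x₀`. A Newton step with these right inverses kills
the linear part of `K`, so by the mean value inequality the residual after a step is at most
`q / (B₀ (1 + q))` times the step, and the next step is at most `q` times the previous one. The
steps thus decrease geometrically from `B₀ ‖K x₀‖`, the iterates stay in `S`, and they converge to
a zero of `K`.
-/

open Metric Filter Topology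

theorem norm_ring_inverse_one_sub_le {R : Type*} [NormedRing R] [HasSummableGeomSeries R]
    (h1 : ‖(1 : R)‖ ≤ 1) {t : R} (ht : ‖t‖ < 1) :
    ‖Ring.inverse (1 - t)‖ ≤ (1 - ‖t‖)⁻¹ := by
  rw [← geom_series_eq_inverse t ht]
  linarith [tsum_geometric_le_of_norm_lt_one t ht]

namespace ContinuousLinearMap

variable {𝕜 X Y : Type*} [NontriviallyNormedField 𝕜] [NormedAddCommGroup X] [NormedSpace 𝕜 X]
  [NormedAddCommGroup Y] [NormedSpace 𝕜 Y]

noncomputable def perturbRightInverse (B : Y →L[𝕜] X) (T' : X →L[𝕜] Y) : Y →L[𝕜] X :=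
  B.comp (Ring.inverse (T'.comp B))

variable {T T' : X →L[𝕜] Y} {B : Y →L[𝕜] X}

theorem perturbRightInverse_self (hB : T.comp B = .id 𝕜 Y) : perturbRightInverse B T = B := by
  rw [perturbRightInverse, hB, ← one_def, Ring.inverse_one]
  rfl

theorem comp_eq_one_sub_sub_comp (hB : T.comp B = .id 𝕜 Y) : T'.comp B = 1 - (T - T').comp B := by
  rw [sub_comp, hB, one_def, sub_sub_cancel]

variable [CompleteSpace Y]

theorem comp_perturbRightInverse (hB : T.comp B = .id 𝕜 Y) (h : ‖T - T'‖ * ‖B‖ < 1) :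
    T'.comp (perturbRightInverse B T') = .id 𝕜 Y := by
  have hsmall : ‖(T - T').comp B‖ < 1 := (opNorm_comp_le _ _).trans_lt h
  have hunit : IsUnit (T'.comp B) := by
    rw [comp_eq_one_sub_sub_comp hB]
    exact isUnit_one_sub_of_norm_lt_one hsmall
  rw [perturbRightInverse, ← comp_assoc, ← mul_def, Ring.mul_inverse_cancel _ hunit]
  rfl

theorem norm_perturbRightInverse_le (hB : T.comp B = .id 𝕜 Y) {θ : ℝ}
    (h : ‖T - T'‖ * ‖B‖ ≤ θ) (hθ : θ < 1) :
    ‖perturbRightInverse B T'‖ ≤ ‖B‖ / (1 - θ) := by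
  have hsmall : ‖(T - T').comp B‖ ≤ θ := (opNorm_comp_le _ _).trans h
  have hinv : ‖Ring.inverse (T'.comp B)‖ ≤ (1 - θ)⁻¹ := by
    rw [comp_eq_one_sub_sub_comp hB]
    refine (norm_ring_inverse_one_sub_le norm_id_le (hsmall.trans_lt hθ)).trans ?_
    gcongr
  calc ‖perturbRightInverse B T'‖ ≤ ‖B‖ * ‖Ring.inverse (T'.comp B)‖ := opNorm_comp_le _ _
    _ ≤ ‖B‖ * (1 - θ)⁻¹ := by gcongr
    _ = ‖B‖ / (1 - θ) := div_eq_mul_inv _ _ |>.symm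

theorem comp_perturbRightInverse_and_norm_le (hB : T.comp B = .id 𝕜 Y) {β q : ℝ} (hBβ : ‖B‖ ≤ β)
    (hβ : 0 < β) (hq : 0 ≤ q) (h : ‖T - T'‖ ≤ q / (β * (1 + q))) :
    T'.comp (perturbRightInverse B T') = .id 𝕜 Y ∧ ‖perturbRightInverse B T'‖ ≤ (1 + q) * β := by
  have hθ : ‖T - T'‖ * ‖B‖ ≤ q / (1 + q) :=
    calc ‖T - T'‖ * ‖B‖ ≤ q / (β * (1 + q)) * β := by gcongr
      _ = q / (1 + q) := by field_simp
  have hθ1 : q / (1 + q) < 1 := (div_lt_one (by linarith)).2 (by linarith)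
  refine ⟨comp_perturbRightInverse hB (hθ.trans_lt hθ1), ?_⟩
  calc ‖perturbRightInverse B T'‖ ≤ ‖B‖ / (1 - q / (1 + q)) :=
        norm_perturbRightInverse_le hB hθ hθ1
    _ ≤ β / (1 - q / (1 + q)) := by gcongr
    _ = (1 + q) * β := by field_simp; ring

end ContinuousLinearMap

theorem iterate_mem_closedBall_and_dist_le_geometric {E : Type*} [PseudoMetricSpace E]
    {f : E → E} {x₀ : E} {a q : ℝ} (hq0 : 0 ≤ q) (hq1 : q < 1) (h₀ : dist x₀ (f x₀) ≤ a)
    (hstep : ∀ x ∈ closedBall x₀ (a / (1 - q)), f x ∈ closedBall x₀ (a / (1 - q)) →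
      dist (f x) (f (f x)) ≤ q * dist x (f x)) (n : ℕ) :
    f^[n] x₀ ∈ closedBall x₀ (a / (1 - q)) ∧ dist (f^[n] x₀) (f^[n + 1] x₀) ≤ a * q ^ n := by
  have ha : 0 ≤ a := dist_nonneg.trans h₀
  have hq1' : 0 < 1 - q := sub_pos.mpr hq1
  have hradius : ∀ m : ℕ, a * (1 - q ^ m) / (1 - q) ≤ a / (1 - q) := fun m ↦ by
    gcongr
    exact mul_le_of_le_one_right ha (by linarith [pow_nonneg hq0 m])
  suffices h : dist (f^[n] x₀) x₀ ≤ a * (1 - q ^ n) / (1 - q) ∧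
      dist (f^[n] x₀) (f^[n + 1] x₀) ≤ a * q ^ n from ⟨h.1.trans (hradius n), h.2⟩
  induction n with
  | zero => simpa using h₀
  | succ n ih =>
    obtain ⟨hfar, hnear⟩ := ih
    have hfar' : dist (f^[n + 1] x₀) x₀ ≤ a * (1 - q ^ (n + 1)) / (1 - q) :=
      calc dist (f^[n + 1] x₀) x₀ ≤ dist (f^[n] x₀) (f^[n + 1] x₀) + dist (f^[n] x₀) x₀ :=
            dist_triangle_left _ _ _
        _ ≤ a * q ^ n + a * (1 - q ^ n) / (1 - q) := add_le_add hnear hfar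
        _ = a * (1 - q ^ (n + 1)) / (1 - q) := by field_simp; ring
    refine ⟨hfar', ?_⟩
    rw [Function.iterate_succ_apply' f (n + 1), Function.iterate_succ_apply' f n] at *
    calc dist (f (f^[n] x₀)) (f (f (f^[n] x₀))) ≤ q * dist (f^[n] x₀) (f (f^[n] x₀)) :=
          hstep _ (hfar.trans (hradius n)) (hfar'.trans (hradius (n + 1)))
      _ ≤ q * (a * q ^ n) := by gcongr
      _ = a * q ^ (n + 1) := by ring

theorem apply_eq_zero_of_tendsto_of_norm_le {X Y : Type*} [NormedAddCommGroup X]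
    [NormedAddCommGroup Y] {K : X → Y} {xs : ℕ → X} {x : X} {δ : ℝ}
    (hlim : Tendsto xs atTop (𝓝 x)) (hK : ContinuousAt K x)
    (hres : ∀ n, ‖K (xs (n + 1))‖ ≤ δ * ‖xs (n + 1) - xs n‖) : K x = 0 := by
  have hshift : Tendsto (fun n ↦ xs (n + 1)) atTop (𝓝 x) := hlim.comp (tendsto_add_atTop_nat 1)
  have hsteps : Tendsto (fun n ↦ δ * ‖xs (n + 1) - xs n‖) atTop (𝓝 0) := by
    simpa using ((hshift.sub hlim).norm.const_mul δ)
  exact tendsto_nhds_unique (hK.tendsto.comp hshift) (squeeze_zero_norm hres hsteps)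

section Newton

variable {X Y : Type*} [NormedAddCommGroup X] [NormedSpace ℝ X] [NormedAddCommGroup Y]
  [NormedSpace ℝ Y] {K : X → Y} {K' : X → X →L[ℝ] Y} {R : X → Y →L[ℝ] X} {x : X}

def newtonStep (K : X → Y) (R : X → Y →L[ℝ] X) (x : X) : X :=
  x - R x (K x)

theorem newtonStep_sub (K : X → Y) (R : X → Y →L[ℝ] X) (x : X) :
    newtonStep K R x - x = -R x (K x) := by
  rw [newtonStep, sub_sub_cancel_left]

theorem apply_newtonStep_sub (hR : (K' x).comp (R x) = .id ℝ Y) :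
    K' x (newtonStep K R x - x) = -K x := by
  rw [newtonStep_sub, map_neg, ← ContinuousLinearMap.comp_apply, hR,
    ContinuousLinearMap.id_apply]

theorem norm_newtonStep_sub_le (K : X → Y) (R : X → Y →L[ℝ] X) (x : X) :
    ‖newtonStep K R x - x‖ ≤ ‖R x‖ * ‖K x‖ := by
  rw [newtonStep_sub, norm_neg]
  exact (R x).le_opNorm _

theorem norm_apply_newtonStep_le {S : Set X} {δ : ℝ} (hS : Convex ℝ S)
    (hK : ∀ y ∈ S, HasFDerivAt K (K' y) y) (hK' : ∀ y ∈ S, ‖K' y - K' x‖ ≤ δ)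
    (hR : (K' x).comp (R x) = .id ℝ Y) (hx : x ∈ S) (hxS : newtonStep K R x ∈ S) :
    ‖K (newtonStep K R x)‖ ≤ δ * ‖newtonStep K R x - x‖ := by
  have hmvt := hS.norm_image_sub_le_of_norm_hasFDerivWithin_le'
    (fun y hy ↦ (hK y hy).hasFDerivWithinAt) hK' hx hxS
  rwa [apply_newtonStep_sub hR, sub_neg_eq_add, sub_add_cancel] at hmvt

theorem dist_newtonStep_newtonStep_le {S : Set X} {δ M : ℝ} (hS : Convex ℝ S)
    (hK : ∀ y ∈ S, HasFDerivAt K (K' y) y) (hK' : ∀ y ∈ S, ∀ z ∈ S, ‖K' y - K' z‖ ≤ δ)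
    (hR : ∀ y ∈ S, (K' y).comp (R y) = .id ℝ Y) (hRM : ∀ y ∈ S, ‖R y‖ ≤ M)
    (hx : x ∈ S) (hxS : newtonStep K R x ∈ S) :
    dist (newtonStep K R x) (newtonStep K R (newtonStep K R x)) ≤
      M * δ * dist x (newtonStep K R x) := by
  set y := newtonStep K R x
  have hM : 0 ≤ M := (norm_nonneg _).trans (hRM x hx)
  rw [dist_comm, dist_comm x, dist_eq_norm, dist_eq_norm]
  calc ‖newtonStep K R y - y‖ ≤ ‖R y‖ * ‖K y‖ := norm_newtonStep_sub_le K R y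
    _ ≤ M * (δ * ‖y - x‖) := by
      gcongr
      · exact hRM y hxS
      · exact norm_apply_newtonStep_le hS hK (fun z hz ↦ hK' z hz x hx) (hR x hx) hx hxS
    _ = M * δ * ‖y - x‖ := by ring

theorem exists_tendsto_iterate_newtonStep [CompleteSpace X] {x₀ : X} {a q δ M : ℝ} (hq0 : 0 ≤ q)
    (hq1 : q < 1) (hK : ∀ y ∈ closedBall x₀ (a / (1 - q)), HasFDerivAt K (K' y) y)
    (hK' : ∀ y ∈ closedBall x₀ (a / (1 - q)), ∀ z ∈ closedBall x₀ (a / (1 - q)),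
      ‖K' y - K' z‖ ≤ δ)
    (hR : ∀ y ∈ closedBall x₀ (a / (1 - q)), (K' y).comp (R y) = .id ℝ Y)
    (hRM : ∀ y ∈ closedBall x₀ (a / (1 - q)), ‖R y‖ ≤ M) (hMδ : M * δ ≤ q)
    (h₀ : dist x₀ (newtonStep K R x₀) ≤ a) :
    ∃ xstar ∈ closedBall x₀ (a / (1 - q)), K xstar = 0 ∧
      Tendsto (fun n ↦ (newtonStep K R)^[n] x₀) atTop (𝓝 xstar) ∧
      ∀ n, (newtonStep K R)^[n] x₀ ∈ closedBall x₀ (a / (1 - q)) ∧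
        dist ((newtonStep K R)^[n] x₀) xstar ≤ a * q ^ n / (1 - q) := by
  set N := newtonStep K R
  set xs : ℕ → X := fun n ↦ N^[n] x₀
  have hconv : Convex ℝ (closedBall x₀ (a / (1 - q))) := convex_closedBall _ _
  have hiter := iterate_mem_closedBall_and_dist_le_geometric hq0 hq1 h₀ fun x hx hNx ↦
    (dist_newtonStep_newtonStep_le hconv hK hK' hR hRM hx hNx).trans (by gcongr)
  have hgeom : ∀ n, dist (xs n) (xs (n + 1)) ≤ a * q ^ n := fun n ↦ (hiter n).2
  obtain ⟨xstar, hlim⟩ := cauchySeq_tendsto_of_complete (cauchySeq_of_le_geometric q _ hq1 hgeom)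
  have htail := dist_le_of_le_geometric_of_tendsto q _ hq1 hgeom hlim
  have hxstar : xstar ∈ closedBall x₀ (a / (1 - q)) := by
    rw [mem_closedBall, dist_comm]
    simpa [xs] using htail 0
  refine ⟨xstar, hxstar, ?_, hlim, fun n ↦ ⟨(hiter n).1, htail n⟩⟩
  refine apply_eq_zero_of_tendsto_of_norm_le (δ := δ) hlim (hK _ hxstar).continuousAt fun n ↦ ?_
  have hnext := (hiter (n + 1)).1
  simp only [xs]
  rw [Function.iterate_succ_apply'] at hnext ⊢
  exact norm_apply_newtonStep_le hconv hK (fun y hy ↦ hK' y hy _ (hiter n).1) (hR _ (hiter n).1)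
    (hiter n).1 hnext

end Newton

/-- Theorem 2.5 (Newton–Kantorovich method with right inverses): under the stated conditions
the equation `K x = 0` has a solution `x*` in the ball `S`, obtained as the limit of a Newton
iteration `x_{n+1} = x_n - [K'(x_n)]_r^{-1} K x_n`, with geometric rate of convergence. -/
theorem stmt_1 {X Y : Type*} [NormedAddCommGroup X] [NormedSpace ℝ X] [CompleteSpace X]
    [NormedAddCommGroup Y] [NormedSpace ℝ Y] [CompleteSpace Y]
    (K : X → Y) (K' : X → X →L[ℝ] Y) (x₀ : X) (q B₀ : ℝ)
    (hq0 : 0 < q) (hq1 : q < 1) (hB₀ : 0 < B₀)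
    (S : Set X) (hS : S = Metric.closedBall x₀ (B₀ * ‖K x₀‖ / (1 - q)))
    (hdiff : ∀ x ∈ S, HasFDerivAt K (K' x) x)
    (B : Y →L[ℝ] X) (hright : (K' x₀).comp B = ContinuousLinearMap.id ℝ Y)
    (hBnorm : ‖B‖ ≤ B₀)
    (hlip : ∀ x₁ ∈ S, ∀ x₂ ∈ S, ‖K' x₁ - K' x₂‖ ≤ q / (B₀ * (1 + q))) :
    ∃ xstar ∈ S, K xstar = 0 ∧
      ∃ xs : ℕ → X, xs 0 = x₀ ∧ (∀ n, xs n ∈ S) ∧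
        (∀ n, (K' (xs n)) (xs (n + 1) - xs n) = -(K (xs n))) ∧
        (∀ n, ‖xs (n + 1) - xs n‖ ≤ (1 + q) * B₀ * ‖K (xs n)‖) ∧
        (∀ n, ‖xstar - xs n‖ ≤ q ^ n * ‖K x₀‖ * B₀ / (1 - q)) ∧
        Filter.Tendsto xs Filter.atTop (nhds xstar) := by
  have hx₀S : x₀ ∈ S := hS ▸ mem_closedBall_self (by bound)
  set R : X → Y →L[ℝ] X := fun x ↦ B.perturbRightInverse (K' x)
  have hRS : ∀ x ∈ S, (K' x).comp (R x) = .id ℝ Y ∧ ‖R x‖ ≤ (1 + q) * B₀ := fun x hx ↦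
    ContinuousLinearMap.comp_perturbRightInverse_and_norm_le hright hBnorm hB₀ hq0.le
      (hlip _ hx₀S _ hx)
  have hfirst : dist x₀ (newtonStep K R x₀) ≤ B₀ * ‖K x₀‖ := by
    rw [dist_comm, dist_eq_norm]
    refine (norm_newtonStep_sub_le K R x₀).trans ?_
    simp only [R, ContinuousLinearMap.perturbRightInverse_self hright]
    gcongr
  subst hS
  obtain ⟨xstar, hxstar, hzero, hlim, hiter⟩ := exists_tendsto_iterate_newtonStep hq0.le hq1 hdiff
    hlip (fun x hx ↦ (hRS x hx).1) (fun x hx ↦ (hRS x hx).2) (le_of_eq (by field_simp)) hfirst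
  refine ⟨xstar, hxstar, hzero, _, rfl, fun n ↦ (hiter n).1, fun n ↦ ?_, fun n ↦ ?_, fun n ↦ ?_,
    hlim⟩
  · rw [Function.iterate_succ_apply']
    exact apply_newtonStep_sub (hRS _ (hiter n).1).1
  · rw [Function.iterate_succ_apply']
    exact (norm_newtonStep_sub_le K R _).trans (by gcongr; exact (hRS _ (hiter n).1).2)
  · rw [← dist_eq_norm, dist_comm]
    exact (hiter n).2.trans_eq (by ring)
end

section
/- Let X and Y be Banach spaces, K : X → Y a map, x₀ ∈ X, 0 < q < 1, B₀ > 0, and set η₀ = ‖K(x₀)‖. Let S be the closed ball in X of radius B₀η₀/(1−q) centered at x₀. Assume: (i) K is Fréchet differentiable at every point of S; (ii) K'(x₀) has a bounded linear right inverse B : Y → X (K'(x₀) ∘ B = id_Y) with ‖B‖ ≤ B₀; (iii) ‖K'(x₁) − K'(x₂)‖ ≤ q/B₀ for all x₁, x₂ ∈ S. Define the modified Newton sequence by x_{n+1} = x_n − B(K(x_n)). Then every x_n lies in S, the sequence converges to a point x* ∈ S with K(x*) = 0, and ‖x* − x_n‖ ≤ qⁿ η₀ B₀/(1−q) for all n.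 -/
/-
The modified Newton map `x ↦ x - B (K x)` is a contraction of the residual: since `K'(x₀) B = id`,
the residual after a step is `K x' - K x - K'(x₀) (x' - x)`, which by the mean value inequality is at
most `(q / B₀) ‖x' - x‖ ≤ q ‖K x‖`. Hence `‖K xₙ‖ ≤ qⁿ η₀` and the steps `‖xₙ₊₁ - xₙ‖ ≤ B₀ qⁿ η₀`
decay geometrically; their partial sums keep every iterate inside `S`, the sequence is Cauchy, and
its limit is a zero of the continuous map `K`.
-/

open Metric Filter Topology

theorem mem_closedBall_of_dist_le_geom_sum {α : Type*} [PseudoMetricSpace α] {x z : α}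
    {q c : ℝ} {m : ℕ} (hq : 0 ≤ q) (hq1 : q < 1) (hc : 0 ≤ c)
    (hz : dist z x ≤ (1 - q ^ m) / (1 - q) * c) : z ∈ closedBall x (c / (1 - q)) := by
  have h1q : 0 < 1 - q := sub_pos.mpr hq1
  calc dist z x ≤ (1 - q ^ m) / (1 - q) * c := hz
    _ ≤ 1 / (1 - q) * c := by gcongr; linarith [pow_nonneg hq m]
    _ = c / (1 - q) := by ring

section ModifiedNewton

variable {X Y : Type*} [NormedAddCommGroup X] [NormedSpace ℝ X] [NormedAddCommGroup Y]
  [NormedSpace ℝ Y] {K : X → Y} {K' : X → X →L[ℝ] Y} {A : X →L[ℝ] Y} {B : Y →L[ℝ] X}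

theorem norm_apply_sub_apply_apply_le_of_comp_eq_id {s : Set X} {κ : ℝ} (hs : Convex ℝ s)
    (hK : ∀ x ∈ s, HasFDerivAt K (K' x) x) (hK' : ∀ x ∈ s, ‖K' x - A‖ ≤ κ)
    (hAB : A.comp B = .id ℝ Y) {x : X} (hx : x ∈ s) (hx' : x - B (K x) ∈ s) :
    ‖K (x - B (K x))‖ ≤ κ * ‖B (K x)‖ := by
  have hA_step : A (x - B (K x) - x) = -K x := by
    rw [sub_sub_cancel_left, map_neg, ← ContinuousLinearMap.comp_apply, hAB,
      ContinuousLinearMap.id_apply]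
  have hmvt := hs.norm_image_sub_le_of_norm_hasFDerivWithin_le'
    (fun z hz => (hK z hz).hasFDerivWithinAt) hK' hx hx'
  rwa [hA_step, sub_neg_eq_add, sub_add_cancel, sub_sub_cancel_left, norm_neg] at hmvt

theorem modifiedNewton_norm_apply_le_and_dist_le {x₀ : X} {xs : ℕ → X} {q κ β : ℝ}
    (hq1 : q < 1) (hκ : 0 ≤ κ) (hκβ : κ * β ≤ q)
    (hK : ∀ x ∈ closedBall x₀ (β * ‖K x₀‖ / (1 - q)), HasFDerivAt K (K' x) x)
    (hK' : ∀ x ∈ closedBall x₀ (β * ‖K x₀‖ / (1 - q)), ‖K' x - A‖ ≤ κ)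
    (hAB : A.comp B = .id ℝ Y) (hB : ‖B‖ ≤ β)
    (hxs0 : xs 0 = x₀) (hxsrec : ∀ n, xs (n + 1) = xs n - B (K (xs n))) (n : ℕ) :
    ‖K (xs n)‖ ≤ q ^ n * ‖K x₀‖ ∧
      dist (xs n) x₀ ≤ (1 - q ^ n) / (1 - q) * (β * ‖K x₀‖) := by
  have hβ : 0 ≤ β := (norm_nonneg B).trans hB
  have hq : 0 ≤ q := (mul_nonneg hκ hβ).trans hκβ
  have hstep : ∀ m, ‖B (K (xs m))‖ ≤ β * ‖K (xs m)‖ := fun m =>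
    (B.le_opNorm _).trans (by gcongr)
  induction n with
  | zero => simp [hxs0]
  | succ n ih =>
    obtain ⟨hres, hdist⟩ := ih
    have hdist' : dist (xs (n + 1)) x₀ ≤ (1 - q ^ (n + 1)) / (1 - q) * (β * ‖K x₀‖) :=
      calc dist (xs (n + 1)) x₀ ≤ ‖B (K (xs n))‖ + dist (xs n) x₀ := by
            rw [hxsrec, ← dist_self_sub_left (xs n)]
            exact dist_triangle _ _ _
        _ ≤ β * (q ^ n * ‖K x₀‖) + (1 - q ^ n) / (1 - q) * (β * ‖K x₀‖) := by
            gcongr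
            exact (hstep n).trans (by gcongr)
        _ = (1 - q ^ (n + 1)) / (1 - q) * (β * ‖K x₀‖) := by
            field_simp [(sub_pos.mpr hq1).ne']
            ring
    refine ⟨?_, hdist'⟩
    have hx := mem_closedBall_of_dist_le_geom_sum hq hq1 (mul_nonneg hβ (norm_nonneg _)) hdist
    have hx' := mem_closedBall_of_dist_le_geom_sum hq hq1 (mul_nonneg hβ (norm_nonneg _)) hdist'
    rw [hxsrec] at hx' ⊢
    calc ‖K (xs n - B (K (xs n)))‖ ≤ κ * ‖B (K (xs n))‖ :=
          norm_apply_sub_apply_apply_le_of_comp_eq_id (convex_closedBall _ _) hK hK' hAB hx hx'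
      _ ≤ κ * (β * (q ^ n * ‖K x₀‖)) := by gcongr; exact (hstep n).trans (by gcongr)
      _ = (κ * β) * (q ^ n * ‖K x₀‖) := by ring
      _ ≤ q * (q ^ n * ‖K x₀‖) := by gcongr
      _ = q ^ (n + 1) * ‖K x₀‖ := by ring

end ModifiedNewton

theorem stmt_2_general {X Y : Type*} [NormedAddCommGroup X] [NormedSpace ℝ X] [CompleteSpace X]
    [NormedAddCommGroup Y] [NormedSpace ℝ Y]
    (K : X → Y) (K' : X → X →L[ℝ] Y) (x₀ : X) (q B₀ : ℝ)
    (hq0 : 0 < q) (hq1 : q < 1) (hB₀ : 0 < B₀)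
    (S : Set X) (hS : S = Metric.closedBall x₀ (B₀ * ‖K x₀‖ / (1 - q)))
    (hdiff : ∀ x ∈ S, HasFDerivAt K (K' x) x)
    (B : Y →L[ℝ] X) (hright : (K' x₀).comp B = ContinuousLinearMap.id ℝ Y)
    (hBnorm : ‖B‖ ≤ B₀)
    (hlip : ∀ x₁ ∈ S, ∀ x₂ ∈ S, ‖K' x₁ - K' x₂‖ ≤ q / B₀)
    (xs : ℕ → X) (hxs0 : xs 0 = x₀)
    (hxsrec : ∀ n, xs (n + 1) = xs n - B (K (xs n))) :
    (∀ n, xs n ∈ S) ∧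
      ∃ xstar ∈ S, K xstar = 0 ∧
        Filter.Tendsto xs Filter.atTop (nhds xstar) ∧
        ∀ n, ‖xstar - xs n‖ ≤ q ^ n * ‖K x₀‖ * B₀ / (1 - q) := by
  subst hS
  have hx₀ : x₀ ∈ closedBall x₀ (B₀ * ‖K x₀‖ / (1 - q)) :=
    mem_closedBall_self (div_nonneg (by positivity) (sub_pos.mpr hq1).le)
  have hbounds := modifiedNewton_norm_apply_le_and_dist_le hq1 (by positivity)
    (div_mul_cancel₀ q hB₀.ne').le hdiff (fun x hx => hlip x hx x₀ hx₀) hright hBnorm hxs0 hxsrec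
  have hmem : ∀ n, xs n ∈ closedBall x₀ (B₀ * ‖K x₀‖ / (1 - q)) := fun n =>
    mem_closedBall_of_dist_le_geom_sum hq0.le hq1 (by positivity) (hbounds n).2
  have hstep : ∀ n, dist (xs n) (xs (n + 1)) ≤ B₀ * ‖K x₀‖ * q ^ n := fun n => by
    rw [hxsrec, dist_self_sub_right]
    calc ‖B (K (xs n))‖ ≤ ‖B‖ * ‖K (xs n)‖ := B.le_opNorm _
      _ ≤ B₀ * (q ^ n * ‖K x₀‖) := by gcongr; exact (hbounds n).1
      _ = B₀ * ‖K x₀‖ * q ^ n := by ring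
  obtain ⟨xstar, hlim⟩ := cauchySeq_tendsto_of_complete (cauchySeq_of_le_geometric q _ hq1 hstep)
  have hxstar := isClosed_closedBall.mem_of_tendsto hlim (Eventually.of_forall hmem)
  have hresidual : Tendsto (fun n => K (xs n)) atTop (𝓝 0) :=
    squeeze_zero_norm (fun n => (hbounds n).1) <| by
      simpa using (tendsto_pow_atTop_nhds_zero_of_lt_one hq0.le hq1).mul_const ‖K x₀‖
  have hzero : K xstar = 0 :=
    tendsto_nhds_unique ((hdiff _ hxstar).continuousAt.tendsto.comp hlim) hresidual
  refine ⟨hmem, xstar, hxstar, hzero, hlim, fun n => ?_⟩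
  rw [← dist_eq_norm, dist_comm]
  exact (dist_le_of_le_geometric_of_tendsto q _ hq1 hstep hlim n).trans_eq (by ring)

/-- Theorem 2.6 (modified Newton–Kantorovich method): under the stated conditions all the
modified Newton iterates `x_{n+1} = x_n - B (K x_n)` stay in the ball `S`, converge to a
solution `x*` of `K x = 0` in `S`, and `‖x* - x_n‖ ≤ qⁿ η₀ B₀ / (1 - q)`. -/
theorem stmt_2 {X Y : Type*} [NormedAddCommGroup X] [NormedSpace ℝ X] [CompleteSpace X]
    [NormedAddCommGroup Y] [NormedSpace ℝ Y] [CompleteSpace Y]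
    (K : X → Y) (K' : X → X →L[ℝ] Y) (x₀ : X) (q B₀ : ℝ)
    (hq0 : 0 < q) (hq1 : q < 1) (hB₀ : 0 < B₀)
    (S : Set X) (hS : S = Metric.closedBall x₀ (B₀ * ‖K x₀‖ / (1 - q)))
    (hdiff : ∀ x ∈ S, HasFDerivAt K (K' x) x)
    (B : Y →L[ℝ] X) (hright : (K' x₀).comp B = ContinuousLinearMap.id ℝ Y)
    (hBnorm : ‖B‖ ≤ B₀)
    (hlip : ∀ x₁ ∈ S, ∀ x₂ ∈ S, ‖K' x₁ - K' x₂‖ ≤ q / B₀)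
    (xs : ℕ → X) (hxs0 : xs 0 = x₀)
    (hxsrec : ∀ n, xs (n + 1) = xs n - B (K (xs n))) :
    (∀ n, xs n ∈ S) ∧
      ∃ xstar ∈ S, K xstar = 0 ∧
        Filter.Tendsto xs Filter.atTop (nhds xstar) ∧
        ∀ n, ‖xstar - xs n‖ ≤ q ^ n * ‖K x₀‖ * B₀ / (1 - q) :=
  stmt_2_general K K' x₀ q B₀ hq0 hq1 hB₀ S hS hdiff B hright hBnorm hlip xs hxs0 hxsrec
end

section
/- Let 0 < β < α ≤ 1. There exists a constant c > 0, depending only on α and β, such that for every n ≥ 1 and every choice of points t₁, …, t_n ∈ [0, 2π], the function f*(s) = min_{1≤k≤n} |s − t_k|^α on [0, 2π] satisfies: (i) |f*(s') − f*(s'')| ≤ |s' − s''|^α for all s', s'' ∈ [0, 2π]; (ii) f*(t_k) = 0 for every k; (iii) max_{s∈[0,2π]} f*(s) ≥ (π/(n+1))^α; and (iv) sup_{s'≠s''} |f*(s') − f*(s'')| / |s' − s''|^β ≥ c · n^{−(α−β)}. -/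
open Real

lemma rpow_subadd_aux {x y α : ℝ} (hx : 0 ≤ x) (hy : 0 ≤ y) (h0 : 0 ≤ α) (h1 : α ≤ 1) :
    (x + y) ^ α ≤ x ^ α + y ^ α := by
  have h := NNReal.rpow_add_le_add_rpow x.toNNReal y.toNNReal h0 h1
  have h2 := NNReal.coe_le_coe.2 h
  rw [NNReal.coe_add, NNReal.coe_rpow, NNReal.coe_rpow, NNReal.coe_rpow, NNReal.coe_add,
    Real.coe_toNNReal x hx, Real.coe_toNNReal y hy] at h2
  exact h2

lemma pigeonhole_aux (n : ℕ) (hn : 1 ≤ n) (t : Fin n → ℝ) :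
    ∃ s ∈ Set.Icc (0:ℝ) (2 * π), ∀ k, π / (n + 1) ≤ |s - t k| := by
  by_contra h
  push_neg at h
  have hcover : Set.Icc (0:ℝ) (2 * π) ⊆ ⋃ k, Metric.ball (t k) (π / (n + 1)) := by
    intro s hs
    obtain ⟨k, hk⟩ := h s hs
    exact Set.mem_iUnion.2 ⟨k, by simpa [Metric.mem_ball, Real.dist_eq] using hk⟩
  have h1 := (MeasureTheory.measure_mono hcover).trans
    (MeasureTheory.measure_iUnion_fintype_le MeasureTheory.volume _)
  have hπ := Real.pi_pos
  have hn1 : (1:ℝ) ≤ n := by exact_mod_cast hn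
  rw [Real.volume_Icc] at h1
  simp only [Real.volume_ball] at h1
  rw [← ENNReal.ofReal_sum_of_nonneg (fun i _ => by positivity)] at h1
  rw [ENNReal.ofReal_le_ofReal_iff (by positivity)] at h1
  rw [Finset.sum_const, Finset.card_univ, Fintype.card_fin, nsmul_eq_mul] at h1
  have hcontra : (n:ℝ) * (2 * (π / (↑n + 1))) < 2 * π - 0 := by
    rw [sub_zero]
    have hpos : (0:ℝ) < (n:ℝ) + 1 := by positivity
    have hx : π / ((n:ℝ) + 1) * ((n:ℝ) + 1) = π := div_mul_cancel₀ π (ne_of_gt hpos)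
    nlinarith [hx, div_pos hπ hpos]
  linarith

/-- Sharpness construction: for `0 < β < α ≤ 1` there is `c > 0` (depending only on `α, β`)
such that for every `n ≥ 1` and nodes `t₁,…,t_n ∈ [0,2π]`, the function
`f*(s) = min_k |s - t_k|^α` is in `H_α(1)`, vanishes at all nodes, has maximum at least
`(π/(n+1))^α`, and has Hölder-`β` seminorm at least `c n^{-(α-β)}`. -/
theorem stmt_11 (α β : ℝ) (hβ0 : 0 < β) (hβα : β < α) (hα1 : α ≤ 1) :
    ∃ c > 0, ∀ n : ℕ, 1 ≤ n → ∀ t : Fin n → ℝ, (∀ k, t k ∈ Set.Icc 0 (2 * π)) →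
      (∀ s' ∈ Set.Icc (0:ℝ) (2 * π), ∀ s'' ∈ Set.Icc (0:ℝ) (2 * π),
          |(⨅ k : Fin n, |s' - t k| ^ α) - ⨅ k : Fin n, |s'' - t k| ^ α| ≤ |s' - s''| ^ α) ∧
      (∀ k : Fin n, (⨅ i : Fin n, |t k - t i| ^ α) = 0) ∧
      ((π / (n + 1)) ^ α ≤ ⨆ s : Set.Icc (0:ℝ) (2 * π), ⨅ k : Fin n, |(s:ℝ) - t k| ^ α) ∧
      (c * (n : ℝ) ^ (-(α - β)) ≤
        ⨆ p : {q : Set.Icc (0:ℝ) (2 * π) × Set.Icc (0:ℝ) (2 * π) // (q.1 : ℝ) ≠ (q.2 : ℝ)},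
          |(⨅ k : Fin n, |(p.1.1 : ℝ) - t k| ^ α) - ⨅ k : Fin n, |(p.1.2 : ℝ) - t k| ^ α| /
            |(p.1.1 : ℝ) - (p.1.2 : ℝ)| ^ β) := by
  have hα0 : 0 < α := hβ0.trans hβα
  have hπ := Real.pi_pos
  refine ⟨1, one_pos, ?_⟩
  intro n hn t ht
  have hne : Nonempty (Fin n) := ⟨⟨0, hn⟩⟩
  set f : ℝ → ℝ := fun s => ⨅ k : Fin n, |s - t k| ^ α with hfdef
  have hbb : ∀ s : ℝ, BddBelow (Set.range fun k : Fin n => |s - t k| ^ α) :=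
    fun s => Finite.bddBelow_range _
  have hfle : ∀ (s : ℝ) (k : Fin n), f s ≤ |s - t k| ^ α := fun s k => ciInf_le (hbb s) k
  have hfnonneg : ∀ s, 0 ≤ f s :=
    fun s => le_ciInf fun k => Real.rpow_nonneg (abs_nonneg _) α
  have hmin : ∀ s : ℝ, ∃ k₀ : Fin n, f s = |s - t k₀| ^ α ∧ ∀ k, |s - t k₀| ≤ |s - t k| := by
    intro s
    obtain ⟨k₀, hk₀⟩ := Finite.exists_min (fun k : Fin n => |s - t k|)
    exact ⟨k₀, le_antisymm (hfle s k₀)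
      (le_ciInf fun k => Real.rpow_le_rpow (abs_nonneg _) (hk₀ k) hα0.le), hk₀⟩
  have hzero : ∀ k : Fin n, f (t k) = 0 := by
    intro k
    refine le_antisymm ?_ (hfnonneg _)
    have := hfle (t k) k
    simpa [Real.zero_rpow hα0.ne'] using this
  -- the key one-sided Hölder estimate
  have key : ∀ s' s'' : ℝ, f s' - f s'' ≤ |s' - s''| ^ α := by
    intro s' s''
    obtain ⟨k₀, hk₀, hmink₀⟩ := hmin s''
    have h1 : f s' ≤ |s' - t k₀| ^ α := hfle s' k₀
    have h2 : |s' - t k₀| ≤ |s'' - t k₀| + |s' - s''| := by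
      calc |s' - t k₀| = |(s'' - t k₀) + (s' - s'')| := by ring_nf
        _ ≤ |s'' - t k₀| + |s' - s''| := abs_add_le _ _
    have h3 : |s' - t k₀| ^ α ≤ (|s'' - t k₀| + |s' - s''|) ^ α :=
      Real.rpow_le_rpow (abs_nonneg _) h2 hα0.le
    have h4 := rpow_subadd_aux (abs_nonneg (s'' - t k₀)) (abs_nonneg (s' - s'')) hα0.le hα1
    linarith
  have holder : ∀ s' ∈ Set.Icc (0:ℝ) (2 * π), ∀ s'' ∈ Set.Icc (0:ℝ) (2 * π),
      |f s' - f s''| ≤ |s' - s''| ^ α := by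
    intro s' _ s'' _
    rw [abs_sub_le_iff]
    exact ⟨key s' s'', (key s'' s').trans_eq (by rw [abs_sub_comm])⟩
  obtain ⟨s₀, hs₀, hfar⟩ := pigeonhole_aux n hn t
  refine ⟨holder, hzero, ?_, ?_⟩
  · -- sup bound
    have hbA : BddAbove (Set.range fun s : Set.Icc (0:ℝ) (2 * π) => f s) := by
      refine ⟨(2 * π) ^ α, ?_⟩
      rintro x ⟨s, rfl⟩
      have k₀ : Fin n := ⟨0, hn⟩
      have hb : |(s:ℝ) - t k₀| ≤ 2 * π := by
        have h1 := s.2.1; have h2 := s.2.2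
        have h3 := (ht k₀).1; have h4 := (ht k₀).2
        rw [abs_le]; constructor <;> linarith
      exact (hfle s k₀).trans (Real.rpow_le_rpow (abs_nonneg _) hb hα0.le)
    have h5 : (π / (n + 1)) ^ α ≤ f s₀ :=
      le_ciInf fun k => Real.rpow_le_rpow (by positivity) (hfar k) hα0.le
    exact h5.trans (le_ciSup hbA ⟨s₀, hs₀⟩)
  · -- Hölder seminorm lower bound
    obtain ⟨k₀, hk₀, hmink₀⟩ := hmin s₀
    have hd : π / (↑n + 1) ≤ |s₀ - t k₀| := hfar k₀
    have hdpos : 0 < |s₀ - t k₀| := lt_of_lt_of_le (by positivity) hd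
    have hne' : (s₀ : ℝ) ≠ t k₀ := sub_ne_zero.mp (abs_pos.mp hdpos)
    set p : {q : Set.Icc (0:ℝ) (2 * π) × Set.Icc (0:ℝ) (2 * π) // (q.1 : ℝ) ≠ (q.2 : ℝ)} :=
      ⟨(⟨s₀, hs₀⟩, ⟨t k₀, ht k₀⟩), hne'⟩ with hp
    have hbA2 : BddAbove (Set.range
        fun p : {q : Set.Icc (0:ℝ) (2 * π) × Set.Icc (0:ℝ) (2 * π) // (q.1 : ℝ) ≠ (q.2 : ℝ)} =>
          |f p.1.1 - f p.1.2| / |(p.1.1 : ℝ) - (p.1.2 : ℝ)| ^ β) := by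
      refine ⟨(2 * π) ^ (α - β), ?_⟩
      rintro x ⟨q, rfl⟩
      have hΔpos : 0 < |(q.1.1 : ℝ) - (q.1.2 : ℝ)| := abs_pos.mpr (sub_ne_zero.mpr q.2)
      have hΔle : |(q.1.1 : ℝ) - (q.1.2 : ℝ)| ≤ 2 * π := by
        have h1 := q.1.1.2.1; have h2 := q.1.1.2.2
        have h3 := q.1.2.2.1; have h4 := q.1.2.2.2
        rw [abs_le]; constructor <;> linarith
      have hnum := holder q.1.1 q.1.1.2 q.1.2 q.1.2.2
      have hden : (0:ℝ) < |(q.1.1 : ℝ) - (q.1.2 : ℝ)| ^ β := Real.rpow_pos_of_pos hΔpos β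
      calc |f q.1.1 - f q.1.2| / |(q.1.1 : ℝ) - (q.1.2 : ℝ)| ^ β
          ≤ |(q.1.1 : ℝ) - (q.1.2 : ℝ)| ^ α / |(q.1.1 : ℝ) - (q.1.2 : ℝ)| ^ β :=
            (div_le_div_iff_of_pos_right hden).mpr hnum
        _ = |(q.1.1 : ℝ) - (q.1.2 : ℝ)| ^ (α - β) := by
            rw [Real.rpow_sub hΔpos]
        _ ≤ (2 * π) ^ (α - β) :=
            Real.rpow_le_rpow (abs_nonneg _) hΔle (by linarith)
    have hval : (1 : ℝ) * (n : ℝ) ^ (-(α - β)) ≤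
        |f p.1.1 - f p.1.2| / |(p.1.1 : ℝ) - (p.1.2 : ℝ)| ^ β := by
      have hn1 : (1:ℝ) ≤ n := by exact_mod_cast hn
      have hval1 : |f p.1.1 - f p.1.2| / |(p.1.1 : ℝ) - (p.1.2 : ℝ)| ^ β
          = |s₀ - t k₀| ^ (α - β) := by
        simp only [hp]
        rw [hzero k₀, sub_zero, hk₀,
          abs_of_nonneg (Real.rpow_nonneg (abs_nonneg _) α), Real.rpow_sub hdpos]
      rw [hval1]
      have h6 : (1:ℝ) / n ≤ π / (↑n + 1) := by
        rw [div_le_div_iff₀ (by linarith) (by positivity)]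
        nlinarith [Real.pi_gt_three]
      have h7 : (1:ℝ) / n ≤ |s₀ - t k₀| := h6.trans hd
      have h8 : ((1:ℝ) / n) ^ (α - β) ≤ |s₀ - t k₀| ^ (α - β) :=
        Real.rpow_le_rpow (by positivity) h7 (by linarith)
      have h9 : ((1:ℝ) / n) ^ (α - β) = (n : ℝ) ^ (-(α - β)) := by
        rw [one_div, ← Real.rpow_neg_one, ← Real.rpow_mul (Nat.cast_nonneg n), neg_one_mul]
      rw [one_mul, ← h9]
      exact h8
    exact hval.trans (le_ciSup hbA2 p)
end
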